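/- arXiv:1011.1945 — 3 statements merged into one kernel-verified Lean document; each statement's English description precedes it below -/
import Mathlib

section
/- Under the bijection φ from numerical sets to partitions, the hookset of φ(S) equals the complement (in the positive integers) of the atom monoid A(S). In particular, φ(S) is a k-core if and only if k ∈ A(S). -/
/-- A partition represented as a weakly decreasing list of positive parts. -/
def IsPartitionList (l : List ℕ) : Prop :=
  l.Pairwise (· ≥ ·) ∧ ∀ p ∈ l, 0 < p

/-- Hook length of the cell in row `i`, column `j` (both 0-indexed). -/
def hookLen (l : List ℕ) (i j : ℕ) : ℕ :=
  (l.getD i 0 - j) + (l.drop (i + 1)).countP (fun a => decide (j < a))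

/-- The hookset of a partition: the set of its hook lengths. -/
def hookset (l : List ℕ) : Set ℕ :=
  {h | ∃ i j, i < l.length ∧ j < l.getD i 0 ∧ h = hookLen l i j}

/-- `l` is a `t`-core: no hook length of `l` is divisible by `t`. -/
def IsCore (l : List ℕ) (t : ℕ) : Prop := ∀ h ∈ hookset l, ¬ t ∣ h

/-- A numerical set: contains 0 and has finite complement in ℕ. -/
def NumericalSet (S : Set ℕ) : Prop := 0 ∈ S ∧ Sᶜ.Finite

/-- The atom monoid of a numerical set. -/
def atomMonoid (S : Set ℕ) : Set ℕ := {n | ∀ s ∈ S, n + s ∈ S}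

/-- The set of positions of east steps of the profile of the partition `l`
(step `i` is north exactly when `i = l[a] + (length - 1 - a)` for some row `a`). -/
def pathSet (l : List ℕ) : Set ℕ :=
  {i | ¬ ∃ a, a < l.length ∧ i = l.getD a 0 + (l.length - 1 - a)}

/-- The staircase partition `(k, k-1, ..., 2, 1)`. -/
def staircase (k : ℕ) : List ℕ := (List.range k).reverse.map (· + 1)

/-!
Read the profile of `l`, which has `ℓ` rows, as a lattice path. Row `a` ends in the north step at position
`northStep l a = l[a] + (ℓ - 1 - a)`, and column `j` begins with the east step at position
`eastStep l j = j + (ℓ - l'[j])`, where `l'[j] = colLen l j` is the length of column `j`.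
The cell `(a, j)` exists iff that east step comes before that north step, and then its hook
length is the difference of the two positions. Since every east step belongs to some column,
the hook lengths are exactly the differences `m - s` with `s ∈ S`, `m ∉ S`, `s < m`, i.e. the
positive `n` with `n + S ⊄ S`. As `A(S)` is closed under addition, `k ∈ A(S)` forces every
multiple of `k` into `A(S)`, which gives the `k`-core criterion.
-/

def northStep (l : List ℕ) (a : ℕ) : ℕ := l.getD a 0 + (l.length - 1 - a)

def colLen (l : List ℕ) (j : ℕ) : ℕ := l.countP (fun a => decide (j < a))

def eastStep (l : List ℕ) (j : ℕ) : ℕ := j + (l.length - colLen l j)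

theorem mem_pathSet {l : List ℕ} {i : ℕ} :
    i ∈ pathSet l ↔ ∀ a < l.length, i ≠ northStep l a := by
  simp [pathSet, northStep]

theorem colLen_le_length (l : List ℕ) (j : ℕ) : colLen l j ≤ l.length :=
  List.countP_le_length

section Antitone

variable {l : List ℕ} (hl : l.Pairwise (· ≥ ·))
include hl

theorem getD_le_getD_of_le {a b : ℕ} (hab : a ≤ b) (hb : b < l.length) :
    l.getD b 0 ≤ l.getD a 0 := by
  rw [List.getD_eq_getElem _ _ hb, List.getD_eq_getElem _ _ (by omega)]
  rcases hab.eq_or_lt with rfl | h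
  · rfl
  · exact List.pairwise_iff_getElem.1 hl a b _ _ h

theorem lt_getD_iff_lt_colLen {b : ℕ} (hb : b < l.length) (j : ℕ) :
    j < l.getD b 0 ↔ b < colLen l j := by
  induction l generalizing b with
  | nil => simp at hb
  | cons x xs ih =>
    obtain ⟨hx, hxs⟩ := List.pairwise_cons.1 hl
    have hcons : colLen (x :: xs) j = colLen xs j + if j < x then 1 else 0 := by
      simp [colLen, List.countP_cons]
    rw [hcons]
    cases b with
    | zero =>
      by_cases hjx : j < x
      · simp [hjx]
      · have hxs0 : colLen xs j = 0 := List.countP_eq_zero.2 fun a ha => by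
          simpa using (hx a ha).trans (not_lt.1 hjx)
        simp [hjx, hxs0]
    | succ b =>
      have hb' : b < xs.length := by simpa using hb
      have ih' := ih hxs hb'
      simp only [List.getD_cons_succ]
      by_cases hjx : j < x
      · simp only [hjx, if_true]
        omega
      · have hmem : xs.getD b 0 ∈ xs := by
          rw [List.getD_eq_getElem _ _ hb']; exact List.getElem_mem _
        have hle : xs.getD b 0 ≤ j := (hx _ hmem).trans (not_lt.1 hjx)
        simp only [hjx, if_false]
        omega

theorem colLen_eq_add_countP_drop {i j : ℕ} (hi : i < l.length) (hj : j < l.getD i 0) :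
    colLen l j = i + 1 + (l.drop (i + 1)).countP (fun a => decide (j < a)) := by
  have htake : (l.take (i + 1)).countP (fun a => decide (j < a)) = i + 1 := by
    rw [List.countP_eq_length.2, List.length_take_of_le (by omega)]
    intro a ha
    obtain ⟨k, hk, rfl⟩ := List.mem_iff_getElem.1 ha
    rw [List.length_take] at hk
    have hki := getD_le_getD_of_le hl (a := k) (b := i) (by omega) hi
    rw [List.getD_eq_getElem l 0 (show k < l.length by omega)] at hki
    simpa using hj.trans_le hki
  rw [colLen, ← List.take_append_drop (i + 1) l, List.countP_append, htake, List.take_append_drop]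

theorem hookLen_add_eastStep {i j : ℕ} (hi : i < l.length) (hj : j < l.getD i 0) :
    hookLen l i j + eastStep l j = northStep l i := by
  have hsplit := colLen_eq_add_countP_drop hl hi hj
  have hdrop : (l.drop (i + 1)).countP (fun a => decide (j < a)) ≤ l.length - (i + 1) := by
    simpa using (l.drop (i + 1)).countP_le_length (p := fun a => decide (j < a))
  unfold hookLen eastStep northStep
  omega

theorem eastStep_lt_northStep_iff {b : ℕ} (hb : b < l.length) (j : ℕ) :
    eastStep l j < northStep l b ↔ j < l.getD b 0 := by
  have hcol := lt_getD_iff_lt_colLen hl hb j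
  have := colLen_le_length l j
  unfold eastStep northStep
  omega

theorem eastStep_ne_northStep {b : ℕ} (hb : b < l.length) (j : ℕ) :
    eastStep l j ≠ northStep l b := by
  have hcol := lt_getD_iff_lt_colLen hl hb j
  have := colLen_le_length l j
  unfold eastStep northStep
  omega

theorem eastStep_mem_pathSet (j : ℕ) : eastStep l j ∈ pathSet l :=
  mem_pathSet.2 fun _ ha => eastStep_ne_northStep hl ha j

theorem colLen_eq_of_forall_lt_getD_iff {j r : ℕ} (hr : r ≤ l.length)
    (h : ∀ b < l.length, j < l.getD b 0 ↔ b < r) : colLen l j = r := by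
  have hcol : ∀ b < l.length, b < colLen l j ↔ b < r := fun b hb =>
    (lt_getD_iff_lt_colLen hl hb j).symm.trans (h b hb)
  have := colLen_le_length l j
  by_contra hne
  rcases Nat.lt_or_gt_of_ne hne with hlt | hlt
  · exact (lt_irrefl _) ((hcol _ (by omega)).2 hlt)
  · exact (lt_irrefl _) ((hcol r (by omega)).1 hlt)

theorem exists_eastStep_eq {s : ℕ} (hs : s ∈ pathSet l) : ∃ j, eastStep l j = s := by
  rw [mem_pathSet] at hs
  obtain ⟨r, hr, above, below⟩ : ∃ r ≤ l.length,
      (∀ b < r, s < northStep l b) ∧ (r < l.length → northStep l r < s) := by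
    have hex : ∃ r, l.length ≤ r ∨ northStep l r < s := ⟨_, Or.inl le_rfl⟩
    refine ⟨Nat.find hex, Nat.find_min' hex (Or.inl le_rfl), fun b hb => ?_,
      fun h => (Nat.find_spec hex).resolve_left (by omega)⟩
    obtain ⟨hbl, hsb⟩ := not_or.1 (Nat.find_min hex hb)
    exact (not_lt.1 hsb).lt_of_ne (hs b (not_le.1 hbl))
  have hcol : ∀ b < l.length, s - (l.length - r) < l.getD b 0 ↔ b < r := by
    intro b hb
    unfold northStep at above below
    constructor
    · intro hsb
      by_contra hrb
      have := getD_le_getD_of_le hl (not_lt.1 hrb) hb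
      have := below (by omega)
      omega
    · intro hbr
      have := getD_le_getD_of_le hl (show b ≤ r - 1 by omega) (by omega)
      have := above (r - 1) (by omega)
      omega
  refine ⟨s - (l.length - r), ?_⟩
  have hlen : l.length - r ≤ s := by
    rcases hr.lt_or_eq with h | h
    · have := below h; unfold northStep at this; omega
    · omega
  rw [eastStep, colLen_eq_of_forall_lt_getD_iff hl hr hcol]
  omega

theorem hookset_eq_compl_atomMonoid :
    hookset l = {n | 0 < n ∧ n ∉ atomMonoid (pathSet l)} := by
  ext n
  constructor
  · rintro ⟨i, j, hi, hj, rfl⟩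
    refine ⟨by unfold hookLen; omega, fun hA => ?_⟩
    have := hA _ (eastStep_mem_pathSet hl j)
    rw [hookLen_add_eastStep hl hi hj, mem_pathSet] at this
    exact this i hi rfl
  · rintro ⟨hn, hnA⟩
    obtain ⟨s, hs, hns⟩ : ∃ s ∈ pathSet l, n + s ∉ pathSet l := by
      simpa [atomMonoid] using hnA
    obtain ⟨a, ha, hna⟩ : ∃ a < l.length, n + s = northStep l a := by
      simpa [mem_pathSet] using hns
    obtain ⟨j, rfl⟩ := exists_eastStep_eq hl hs
    have hj : j < l.getD a 0 := (eastStep_lt_northStep_iff hl ha j).1 (by omega)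
    refine ⟨a, j, ha, hj, ?_⟩
    have := hookLen_add_eastStep hl ha hj
    omega

end Antitone

theorem mul_mem_atomMonoid {S : Set ℕ} {k : ℕ} (hk : k ∈ atomMonoid S) (q : ℕ) :
    k * q ∈ atomMonoid S := by
  induction q with
  | zero => intro s hs; simpa using hs
  | succ q ih => intro s hs; rw [Nat.mul_succ, add_assoc]; exact ih _ (hk s hs)

theorem isCore_iff_mem_atomMonoid {l : List ℕ} {S : Set ℕ}
    (h : hookset l = {n | 0 < n ∧ n ∉ atomMonoid S}) {k : ℕ} (hk : 0 < k) :
    IsCore l k ↔ k ∈ atomMonoid S := by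
  rw [IsCore, h]
  constructor
  · intro hcore
    by_contra hkA
    exact hcore k ⟨hk, hkA⟩ dvd_rfl
  · rintro hkA _ ⟨-, hnA⟩ ⟨q, rfl⟩
    exact hnA (mul_mem_atomMonoid hkA q)

theorem stmt4_general (l : List ℕ) (S : Set ℕ) (hl : IsPartitionList l)
    (hφ : pathSet l = S) :
    hookset l = {n | 0 < n ∧ n ∉ atomMonoid S} ∧
    (∀ k : ℕ, 0 < k → (IsCore l k ↔ k ∈ atomMonoid S)) := by
  subst hφ
  have hhook := hookset_eq_compl_atomMonoid hl.1
  exact ⟨hhook, fun _ hk => isCore_iff_mem_atomMonoid hhook hk⟩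

theorem stmt4 (l : List ℕ) (S : Set ℕ) (hl : IsPartitionList l)
    (hS : NumericalSet S) (hφ : pathSet l = S) :
    hookset l = {n | 0 < n ∧ n ∉ atomMonoid S} ∧
    (∀ k : ℕ, 0 < k → (IsCore l k ↔ k ∈ atomMonoid S)) :=
  stmt4_general l S hl hφ
end

section
/- For coprime positive integers s and t, the number of partitions that are simultaneously s-core and t-core is finite. -/
open Finset

theorem List.countP_drop_eq_card_filter {α : Type*} (l : List α) (d : α) (k : ℕ)
    (p : α → Bool) : (l.drop k).countP p = #{a ∈ Finset.Ico k l.length | p (l.getD a d)} := by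
  induction h : l.length - k generalizing k with
  | zero =>
    rw [List.drop_of_length_le (by omega), Finset.Ico_eq_empty_of_le (by omega)]
    rfl
  | succ m ih =>
    have hk : k < l.length := by omega
    rw [List.drop_eq_getElem_cons hk, List.countP_cons, ih (k + 1) (by omega),
      ← insert_Ico_add_one_left_eq_Ico hk, filter_insert, List.getD_eq_getElem _ _ hk]
    split <;> simp_all

theorem List.finite_setOf_length_le_forall_lt (m n : ℕ) :
    {l : List ℕ | l.length ≤ m ∧ ∀ x ∈ l, x < n}.Finite := by
  refine ((List.finite_length_le (Fin n) m).image (List.map Fin.val)).subset ?_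
  rintro l ⟨hlen, hlt⟩
  exact ⟨l.pmap Fin.mk hlt, by simpa using hlen, by simp [List.map_pmap]⟩

def atomAddSubmonoid (S : Set ℕ) : AddSubmonoid ℕ where
  carrier := atomMonoid S
  zero_mem' s hs := by simpa using hs
  add_mem' {a b} ha hb s hs := by simpa [add_assoc] using ha _ (hb s hs)

theorem atomMonoid_subset_of_zero_mem {S : Set ℕ} (h0 : 0 ∈ S) : atomMonoid S ⊆ S :=
  fun n hn => by simpa using hn 0 h0

theorem Nat.setGcd_pair_eq_one {s t : ℕ} (hco : s.Coprime t) : Nat.setGcd {s, t} = 1 :=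
  Nat.eq_one_of_dvd_coprimes hco (Nat.setGcd_dvd_of_mem (by simp))
    (Nat.setGcd_dvd_of_mem (by simp))

section BetaNumbers

variable {l : List ℕ} {i j n t : ℕ}

theorem antitone_getD_of_pairwise (hl : l.Pairwise (· ≥ ·)) : Antitone (l.getD · 0) := by
  intro a b hab
  show l.getD b 0 ≤ l.getD a 0
  by_cases hb : b < l.length
  · rw [List.getD_eq_getElem _ _ hb, List.getD_eq_getElem _ _ (hab.trans_lt hb)]
    simpa using hl.rel_get_of_le (a := ⟨a, hab.trans_lt hb⟩) (b := ⟨b, hb⟩) hab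
  · rw [List.getD_eq_default _ _ (not_lt.1 hb)]
    exact Nat.zero_le _

theorem lt_length_of_lt_getD (h : j < l.getD i 0) : i < l.length := by
  by_contra hi
  rw [List.getD_eq_default _ _ (not_lt.1 hi)] at h
  exact Nat.not_lt_zero _ h

def betaNumber (l : List ℕ) (a : ℕ) : ℕ := l.getD a 0 + (l.length - 1 - a)

theorem strictAntiOn_betaNumber (hl : l.Pairwise (· ≥ ·)) :
    StrictAntiOn (betaNumber l) (Set.Iio l.length) := by
  intro a _ b hb hab
  have : l.getD b 0 ≤ l.getD a 0 := antitone_getD_of_pairwise hl hab.le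
  simp only [Set.mem_Iio] at hb
  unfold betaNumber
  omega

def betaSet (l : List ℕ) : Finset ℕ := (range l.length).image (betaNumber l)

theorem mem_pathSet_iff : n ∈ pathSet l ↔ n ∉ betaSet l := by
  simp [pathSet, betaSet, betaNumber, eq_comm]

theorem zero_mem_pathSet (hl : ∀ p ∈ l, 0 < p) : 0 ∈ pathSet l := by
  rintro ⟨a, ha, h0⟩
  have := hl _ (List.getElem_mem ha)
  rw [List.getD_eq_getElem _ _ ha] at h0
  omega

def shortRowsBelow (l : List ℕ) (i j : ℕ) : ℕ := #{a ∈ Ioo i l.length | l.getD a 0 ≤ j}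

theorem shortRowsBelow_le : shortRowsBelow l i j ≤ l.length - 1 - i := by
  have := card_filter_le (Ioo i l.length) (l.getD · 0 ≤ j)
  rw [Nat.card_Ioo] at this
  unfold shortRowsBelow
  omega

theorem shortRowsBelow_mono : Monotone (shortRowsBelow l i) :=
  fun _ _ hj => card_le_card fun a ha => by
    simp only [mem_filter] at ha ⊢
    exact ⟨ha.1, ha.2.trans hj⟩

theorem hookLen_eq_betaNumber_sub (hj : j < l.getD i 0) :
    hookLen l i j = betaNumber l i - (j + shortRowsBelow l i j) := by
  have hsplit := card_filter_add_card_filter_not (s := Ioo i l.length)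
    (fun a => j < l.getD a 0)
  simp only [not_lt, Nat.card_Ioo] at hsplit
  have := lt_length_of_lt_getD hj
  rw [hookLen, List.countP_drop_eq_card_filter l 0, Ico_add_one_left_eq_Ioo]
  unfold betaNumber shortRowsBelow
  simp only [decide_eq_true_eq]
  omega

theorem add_shortRowsBelow_mem_pathSet (hl : l.Pairwise (· ≥ ·)) (hj : j < l.getD i 0) :
    j + shortRowsBelow l i j ∈ pathSet l := by
  rintro ⟨a, ha, heq⟩
  have hanti := antitone_getD_of_pairwise hl
  have hS : shortRowsBelow l i j ≤ l.length - 1 - i := shortRowsBelow_le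
  rcases le_or_gt a i with hai | hia
  · have : l.getD i 0 ≤ l.getD a 0 := hanti hai
    omega
  rcases le_or_gt (l.getD a 0) j with hshort | hlong
  · have : l.length - a ≤ shortRowsBelow l i j := by
      calc l.length - a = #(Ico a l.length) := (Nat.card_Ico _ _).symm
        _ ≤ _ := card_le_card fun b hb => by
          simp only [mem_Ico] at hb
          simp only [mem_filter, mem_Ioo]
          exact ⟨⟨by omega, hb.2⟩, (hanti hb.1).trans hshort⟩
    omega
  · have : shortRowsBelow l i j ≤ l.length - 1 - a := by
      calc shortRowsBelow l i j ≤ #(Ioo a l.length) := card_le_card fun b hb => by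
            simp only [mem_filter, mem_Ioo] at hb ⊢
            refine ⟨lt_of_not_ge fun hba => ?_, hb.1.2⟩
            exact absurd ((hanti hba).trans hb.2) (not_le.2 hlong)
        _ = l.length - 1 - a := by rw [Nat.card_Ioo]; omega
    omega

theorem card_range_betaNumber_sdiff_betaSet (hl : l.Pairwise (· ≥ ·)) (hi : i < l.length) :
    #(range (betaNumber l i) \ betaSet l) = l.getD i 0 := by
  -- the beta numbers below `betaNumber l i` are those of the rows below row `i`
  have hanti := strictAntiOn_betaNumber hl
  have hinter : range (betaNumber l i) ∩ betaSet l = (Ioo i l.length).image (betaNumber l) := by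
    ext x
    simp only [mem_inter, mem_range, betaSet, mem_image, mem_Ioo]
    constructor
    · rintro ⟨hx, a, ha, rfl⟩
      exact ⟨a, ⟨(hanti.lt_iff_gt ha hi).1 hx, ha⟩, rfl⟩
    · rintro ⟨a, ⟨hia, ha⟩, rfl⟩
      exact ⟨hanti hi ha hia, a, ha, rfl⟩
  have hinj : Set.InjOn (betaNumber l) (Ioo i l.length) :=
    hanti.injOn.mono fun a ha => (mem_Ioo.1 ha).2
  rw [← sdiff_inter_self_left, card_sdiff_of_subset inter_subset_left, hinter,
    card_image_of_injOn hinj, card_range, Nat.card_Ioo]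
  unfold betaNumber
  omega

/-- `j ↦ j + shortRowsBelow l i j` injects the `l.getD i 0` cells of row `i` into the equally
many east steps before `betaNumber l i`, so it is onto. -/
theorem exists_hookLen_eq_betaNumber_sub (hl : l.Pairwise (· ≥ ·)) (hi : i < l.length)
    (hn : n ∈ pathSet l) (hnb : n < betaNumber l i) :
    ∃ j < l.getD i 0, hookLen l i j = betaNumber l i - n := by
  set g : ℕ → ℕ := fun j => j + shortRowsBelow l i j
  have hg : StrictMono g := fun x y h => by
    have := shortRowsBelow_mono (l := l) (i := i) h.le
    simp only [g]
    omega
  have hmaps : (range (l.getD i 0)).image g ⊆ range (betaNumber l i) \ betaSet l := by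
    intro x hx
    obtain ⟨j, hj, rfl⟩ := mem_image.1 hx
    have hj := mem_range.1 hj
    have := shortRowsBelow_le (l := l) (i := i) (j := j)
    have hlt : j + shortRowsBelow l i j < betaNumber l i := by
      unfold betaNumber
      omega
    exact mem_sdiff.2
      ⟨mem_range.2 hlt, mem_pathSet_iff.1 (add_shortRowsBelow_mem_pathSet hl hj)⟩
  have himage := eq_of_subset_of_card_le hmaps (by
    rw [card_image_of_injective _ hg.injective, card_range,
      card_range_betaNumber_sdiff_betaSet hl hi])
  have hn' : n ∈ range (betaNumber l i) \ betaSet l :=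
    mem_sdiff.2 ⟨mem_range.2 hnb, mem_pathSet_iff.1 hn⟩
  obtain ⟨j, hj, rfl⟩ := mem_image.1 (himage ▸ hn')
  exact ⟨j, mem_range.1 hj, hookLen_eq_betaNumber_sub (mem_range.1 hj)⟩

theorem mem_atomMonoid_pathSet_of_isCore (hl : l.Pairwise (· ≥ ·)) (hc : IsCore l t) :
    t ∈ atomMonoid (pathSet l) := by
  intro n hn
  by_contra hnt
  obtain ⟨a, ha, heq⟩ := not_not.1 hnt
  have hnb : n < betaNumber l a := by
    have : n ≠ betaNumber l a := fun hna => hn ⟨a, ha, hna⟩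
    unfold betaNumber at this ⊢
    omega
  obtain ⟨j, hj, hhook⟩ := exists_hookLen_eq_betaNumber_sub hl ha hn hnb
  refine hc _ ⟨a, j, ha, hj, rfl⟩ ⟨1, ?_⟩
  rw [hhook]
  unfold betaNumber
  omega

end BetaNumbers

theorem exists_Ici_subset_pathSet_of_coprime {s t : ℕ} (hco : s.Coprime t) :
    ∃ N, ∀ l, IsPartitionList l → IsCore l s → IsCore l t → Set.Ici N ⊆ pathSet l := by
  obtain ⟨N, hN⟩ := Nat.exists_mem_closure_of_ge {s, t}
  refine ⟨N, fun l hl hs ht n hn => atomMonoid_subset_of_zero_mem (zero_mem_pathSet hl.2) ?_⟩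
  have hle : AddSubmonoid.closure {s, t} ≤ atomAddSubmonoid (pathSet l) :=
    AddSubmonoid.closure_le.2 <| Set.insert_subset_iff.2
      ⟨mem_atomMonoid_pathSet_of_isCore hl.1 hs,
        Set.singleton_subset_iff.2 (mem_atomMonoid_pathSet_of_isCore hl.1 ht)⟩
  exact hle (hN n hn (Nat.setGcd_pair_eq_one hco ▸ one_dvd n))

theorem IsPartitionList.length_le_and_forall_lt {l : List ℕ} {N : ℕ} (hl : IsPartitionList l)
    (hN : Set.Ici N ⊆ pathSet l) : l.length ≤ N ∧ ∀ x ∈ l, x < N := by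
  have hβ : ∀ a < l.length, betaNumber l a < N := fun a ha =>
    lt_of_not_ge fun h => hN h ⟨a, ha, rfl⟩
  constructor
  · rcases l with _ | ⟨x, l⟩
    · simp
    · have h0 := hβ 0 (by simp)
      have hx := hl.2 x List.mem_cons_self
      simp only [betaNumber, List.getD_cons_zero, List.length_cons] at h0 ⊢
      omega
  · intro x hx
    obtain ⟨a, ha, rfl⟩ := List.getElem_of_mem hx
    have := hβ a ha
    rw [betaNumber, List.getD_eq_getElem _ _ ha] at this
    omega

theorem stmt10_general (s t : ℕ) (hco : Nat.Coprime s t) :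
    {l : List ℕ | IsPartitionList l ∧ IsCore l s ∧ IsCore l t}.Finite := by
  obtain ⟨N, hN⟩ := exists_Ici_subset_pathSet_of_coprime hco
  refine (List.finite_setOf_length_le_forall_lt N N).subset ?_
  rintro l ⟨hl, hs, ht⟩
  exact hl.length_le_and_forall_lt (hN l hl hs ht)

theorem stmt10 (s t : ℕ) (hs : 0 < s) (ht : 0 < t) (hco : Nat.Coprime s t) :
    {l : List ℕ | IsPartitionList l ∧ IsCore l s ∧ IsCore l t}.Finite :=
  stmt10_general s t hco
end

section
/- A positive integer s is a hook length of a partition λ if and only if there exists an element x of the associated numerical set S = φ⁻¹(λ) with x + s ∉ S. Consequently, s is not a hook length of λ if and only if s ∈ A(S). -/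
namespace List

theorem antitone_getD {l : List ℕ} (hl : l.Pairwise (· ≥ ·)) : Antitone (l.getD · 0) := by
  intro a b hab
  by_cases hb : b < l.length
  · rcases hab.eq_or_lt with rfl | hab
    · exact le_rfl
    · simp only [getD_eq_getElem _ 0 hb, getD_eq_getElem _ 0 (hab.trans hb)]
      exact pairwise_iff_getElem.mp hl a b (hab.trans hb) hb hab
  · exact (getD_eq_default _ 0 (not_lt.mp hb)).trans_le (Nat.zero_le _)

theorem lt_countP_iff_lt_getD {m : List ℕ} (hm : m.Pairwise (· ≥ ·)) (j k : ℕ) :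
    k < m.countP (fun a => j < a) ↔ j < m.getD k 0 := by
  induction m generalizing k with
  | nil => simp
  | cons x t ih =>
    by_cases hjx : j < x
    · cases k with
      | zero => simp [hjx]
      | succ k => simp [hjx, ih hm.of_cons]
    · have hzero : t.countP (fun a => j < a) = 0 := by
        rw [countP_eq_zero]
        intro a ha
        have := rel_of_pairwise_cons hm ha
        simp only [decide_eq_true_eq]
        omega
      cases k with
      | zero => simp [hjx, hzero]
      | succ k =>
        have hle : t.getD k 0 ≤ x :=
          (antitone_getD hm (Nat.zero_le (k + 1))).trans_eq (getD_cons_zero ..)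
        simpa [hzero, hjx] using hle.trans (not_lt.mp hjx)

theorem countP_drop_le {α : Type*} (l : List α) (p : α → Bool) (i : ℕ) :
    (l.drop (i + 1)).countP p ≤ l.length - 1 - i := by
  have := (l.drop (i + 1)).countP_le_length (p := p)
  rw [length_drop] at this
  omega

end List

def northPos (l : List ℕ) (a : ℕ) : ℕ := l.getD a 0 + (l.length - 1 - a)

/-- The east step of column `j < l[i]` is preceded by `j` east steps and by the north steps of
the rows below row `i` that are not longer than `j`. -/
def eastPos (l : List ℕ) (i j : ℕ) : ℕ :=
  j + (l.length - 1 - i - (l.drop (i + 1)).countP (fun a => j < a))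

theorem mem_pathSet_iff_s18 {l : List ℕ} {x : ℕ} :
    x ∈ pathSet l ↔ ∀ a < l.length, x ≠ northPos l a := by
  simp [pathSet, northPos]

theorem notMem_pathSet_iff {l : List ℕ} {x : ℕ} :
    x ∉ pathSet l ↔ ∃ a < l.length, x = northPos l a := by
  simp [pathSet, northPos]

theorem strictAntiOn_northPos {l : List ℕ} (hl : l.Pairwise (· ≥ ·)) :
    StrictAntiOn (northPos l) (Set.Iio l.length) := by
  intro a _ b hb hab
  have hb : b < l.length := hb
  have : l.getD b 0 ≤ l.getD a 0 := List.antitone_getD hl hab.le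
  unfold northPos
  omega

theorem eastPos_add_hookLen (l : List ℕ) {i j : ℕ} (hj : j < l.getD i 0) :
    eastPos l i j + hookLen l i j = northPos l i := by
  have := l.countP_drop_le (fun a => j < a) i
  unfold eastPos hookLen northPos
  omega

theorem eastPos_lt_northPos (l : List ℕ) {i j : ℕ} (hj : j < l.getD i 0) :
    eastPos l i j < northPos l i := by
  have := l.countP_drop_le (fun a => j < a) i
  unfold eastPos northPos
  omega

theorem strictMono_eastPos (l : List ℕ) (i : ℕ) : StrictMono (eastPos l i) := by
  intro j₁ j₂ hj
  have hcount : (l.drop (i + 1)).countP (fun a => j₂ < a) ≤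
      (l.drop (i + 1)).countP (fun a => j₁ < a) :=
    List.countP_mono_left fun a _ ha => by simp only [decide_eq_true_eq] at ha ⊢; omega
  have := l.countP_drop_le (fun a => j₁ < a) i
  unfold eastPos
  omega

/-- The north step of a row `b ≤ i` comes after the east step of column `j`, as `l[b] ≥ l[i] > j`;
for `b > i`, `lt_countP_iff_lt_getD` decides on which side of it that north step lies. -/
theorem eastPos_ne_northPos {l : List ℕ} (hl : l.Pairwise (· ≥ ·)) {i j b : ℕ}
    (hj : j < l.getD i 0) (hb : b < l.length) : eastPos l i j ≠ northPos l b := by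
  have hcount := l.countP_drop_le (fun a => j < a) i
  unfold eastPos northPos
  rcases lt_or_ge i b with hib | hbi
  · have hrow : (l.drop (i + 1)).getD (b - i - 1) 0 = l.getD b 0 := by
      rw [List.getD_eq_getElem?_getD, List.getElem?_drop, List.getD_eq_getElem?_getD]
      congr 2
      omega
    have := List.lt_countP_iff_lt_getD (hl.sublist (l.drop_sublist (i + 1))) j (b - i - 1)
    rw [hrow] at this
    omega
  · have : l.getD i 0 ≤ l.getD b 0 := List.antitone_getD hl hbi
    omega

/-- `eastPos l i` injects `range l[i]` into the right-hand side, which has `l[i]` elements. -/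
theorem image_eastPos_range {l : List ℕ} (hl : l.Pairwise (· ≥ ·)) {i : ℕ} (hi : i < l.length) :
    (Finset.range (l.getD i 0)).image (eastPos l i) =
      Finset.range (northPos l i) \ (Finset.Ioo i l.length).image (northPos l) := by
  have hIoo : ∀ b ∈ Finset.Ioo i l.length, b ∈ Set.Iio l.length ∧ i < b := fun b hb => by
    simp only [Finset.mem_Ioo] at hb; exact ⟨hb.2, hb.1⟩
  have hlater : (Finset.Ioo i l.length).image (northPos l) ⊆ Finset.range (northPos l i) := by
    simp only [Finset.subset_iff, Finset.mem_image, Finset.mem_range]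
    rintro _ ⟨b, hb, rfl⟩
    exact strictAntiOn_northPos hl hi (hIoo b hb).1 (hIoo b hb).2
  have hcard_later : ((Finset.Ioo i l.length).image (northPos l)).card = l.length - 1 - i := by
    rw [Finset.card_image_of_injOn, Nat.card_Ioo]
    · omega
    · exact (strictAntiOn_northPos hl).injOn.mono fun b hb => (hIoo b hb).1
  refine Finset.eq_of_subset_of_card_le ?_ ?_
  · simp only [Finset.subset_iff, Finset.mem_image, Finset.mem_range, Finset.mem_sdiff]
    rintro _ ⟨j, hj, rfl⟩
    refine ⟨eastPos_lt_northPos l hj, ?_⟩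
    rintro ⟨b, hb, heq⟩
    exact eastPos_ne_northPos hl hj (hIoo b hb).1 heq.symm
  · rw [Finset.card_sdiff_of_subset hlater, hcard_later, Finset.card_range,
      Finset.card_image_of_injective _ (strictMono_eastPos l i).injective, Finset.card_range]
    unfold northPos
    omega

theorem mem_hookset_iff {l : List ℕ} (hl : l.Pairwise (· ≥ ·)) (s : ℕ) :
    s ∈ hookset l ↔ ∃ x ∈ pathSet l, x + s ∉ pathSet l := by
  constructor
  · rintro ⟨i, j, hi, hj, rfl⟩
    exact ⟨eastPos l i j, mem_pathSet_iff_s18.2 fun b hb => eastPos_ne_northPos hl hj hb,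
      notMem_pathSet_iff.2 ⟨i, hi, eastPos_add_hookLen l hj⟩⟩
  · rintro ⟨x, hx, hxs⟩
    obtain ⟨i, hi, hxs⟩ := notMem_pathSet_iff.1 hxs
    have hx_ne := mem_pathSet_iff_s18.1 hx
    have hx_mem : x ∈ Finset.range (northPos l i) \ (Finset.Ioo i l.length).image (northPos l) := by
      simp only [Finset.mem_sdiff, Finset.mem_range, Finset.mem_image, Finset.mem_Ioo, not_exists,
        not_and]
      exact ⟨lt_of_le_of_ne (hxs ▸ Nat.le_add_right x s) (hx_ne i hi),
        fun b hb heq => hx_ne b hb.2 heq.symm⟩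
    rw [← image_eastPos_range hl hi, Finset.mem_image] at hx_mem
    obtain ⟨j, hj, rfl⟩ := hx_mem
    rw [Finset.mem_range] at hj
    exact ⟨i, j, hi, hj, by have := eastPos_add_hookLen l hj; omega⟩

theorem stmt18_general (l : List ℕ) (S : Set ℕ) (hl : IsPartitionList l)
    (hφ : pathSet l = S) (s : ℕ) :
    (s ∈ hookset l ↔ ∃ x ∈ S, x + s ∉ S) ∧
    (s ∉ hookset l ↔ s ∈ atomMonoid S) := by
  subst hφ
  refine ⟨mem_hookset_iff hl.1 s, ?_⟩
  simp only [mem_hookset_iff hl.1 s, atomMonoid, Set.mem_ofPred_eq, not_exists, not_and, not_not,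
    add_comm s]

theorem stmt18 (l : List ℕ) (S : Set ℕ) (hl : IsPartitionList l)
    (hS : NumericalSet S) (hφ : pathSet l = S) (s : ℕ) (hs : 0 < s) :
    (s ∈ hookset l ↔ ∃ x ∈ S, x + s ∉ S) ∧
    (s ∉ hookset l ↔ s ∈ atomMonoid S) :=
  stmt18_general l S hl hφ s
end
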